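/- arXiv:0907.1199 — 3 statements merged into one kernel-verified Lean document; each statement's English description precedes it below -/
import Mathlib

section
/- Let S_n and S be bounded operators on a Hilbert space with Re S_n ≥ 0 and Re S ≥ 0, R_n = (I + S_n)^{-1}, R = (I + S)^{-1}, and fix h ∈ H. If (R_n h, R h) → ‖R h‖² and ((I + Re S_n) R_n h, R_n h) → ‖R h‖², then ‖R_n h − R h‖ → 0. -/
open Filter ContinuousLinearMap

/-- If `R_n = (I + S_n)⁻¹`, `R = (I + S)⁻¹` (with `Re S_n ≥ 0`, `Re S ≥ 0`),
`(R_n h, R h) → ‖R h‖²` and `((I + Re S_n) R_n h, R_n h) → ‖R h‖²`,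
then `‖R_n h − R h‖ → 0`. -/
theorem resolvent_strong_convergence
    {H : Type*} [NormedAddCommGroup H] [InnerProductSpace ℂ H] [CompleteSpace H]
    (Sn : ℕ → (H →L[ℂ] H)) (S : H →L[ℂ] H)
    (hSn : ∀ n, ∀ x : H, 0 ≤ (inner ℂ (Sn n x) x : ℂ).re)
    (hS : ∀ x : H, 0 ≤ (inner ℂ (S x) x : ℂ).re)
    (Rn : ℕ → (H →L[ℂ] H)) (R : H →L[ℂ] H)
    (hRn₁ : ∀ n, Rn n * (1 + Sn n) = 1) (hRn₂ : ∀ n, (1 + Sn n) * Rn n = 1)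
    (hR₁ : R * (1 + S) = 1) (hR₂ : (1 + S) * R = 1)
    (h : H)
    (hconv₁ : Tendsto (fun n => (inner ℂ ((Rn n) h) (R h) : ℂ)) atTop
      (nhds ((‖R h‖ ^ 2 : ℝ) : ℂ)))
    (hconv₂ : Tendsto
      (fun n => (inner ℂ (((1 + (2 : ℂ)⁻¹ • (Sn n + adjoint (Sn n))) : H →L[ℂ] H)
        ((Rn n) h)) ((Rn n) h) : ℂ)) atTop (nhds ((‖R h‖ ^ 2 : ℝ) : ℂ))) :
    Tendsto (fun n => ‖(Rn n) h - R h‖) atTop (nhds 0) := by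
  set q : ℕ → ℝ := fun n =>
    (inner ℂ (((1 + (2 : ℂ)⁻¹ • (Sn n + adjoint (Sn n))) : H →L[ℂ] H)
        ((Rn n) h)) ((Rn n) h) : ℂ).re
      - 2 * (inner ℂ ((Rn n) h) (R h) : ℂ).re + ‖R h‖ ^ 2 with hq
  have hre : ∀ n, (inner ℂ (((1 + (2 : ℂ)⁻¹ • (Sn n + adjoint (Sn n))) : H →L[ℂ] H)
        ((Rn n) h)) ((Rn n) h) : ℂ).re
      = ‖(Rn n) h‖ ^ 2 + (inner ℂ (Sn n ((Rn n) h)) ((Rn n) h) : ℂ).re := by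
    intro n
    set x := (Rn n) h
    have h1 : ((1 + (2 : ℂ)⁻¹ • (Sn n + adjoint (Sn n))) : H →L[ℂ] H) x
        = x + (2 : ℂ)⁻¹ • (Sn n x + adjoint (Sn n) x) := by
      simp [ContinuousLinearMap.add_apply, ContinuousLinearMap.smul_apply]
    rw [h1, inner_add_left, inner_smul_left, inner_add_left]
    have hadj : (inner ℂ (adjoint (Sn n) x) x : ℂ) = inner ℂ x (Sn n x) :=
      ContinuousLinearMap.adjoint_inner_left _ _ _
    rw [hadj, ← inner_conj_symm x (Sn n x)]
    have hsq : (inner ℂ x x : ℂ).re = ‖x‖ ^ 2 := by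
      rw [← RCLike.re_to_complex]; exact inner_self_eq_norm_sq x
    have hsym : (inner ℂ x (Sn n x) : ℂ).re = (inner ℂ (Sn n x) x : ℂ).re :=
      inner_re_symm (𝕜 := ℂ) x (Sn n x)
    simp [Complex.add_re, Complex.mul_re, hsq, hsym]
    rw [← Complex.ofReal_pow, Complex.ofReal_re]
    ring
  have hle : ∀ n, ‖(Rn n) h - R h‖ ^ 2 ≤ q n := by
    intro n
    have := norm_sub_sq (𝕜 := ℂ) ((Rn n) h) (R h)
    rw [hq]
    simp only []
    rw [hre n]
    simp only [RCLike.re_to_complex] at this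
    have h0 := hSn n ((Rn n) h)
    nlinarith [this]
  have h2 : Tendsto q atTop (nhds 0) := by
    have t2 : Tendsto (fun n => (inner ℂ (((1 + (2 : ℂ)⁻¹ • (Sn n + adjoint (Sn n))) : H →L[ℂ] H)
        ((Rn n) h)) ((Rn n) h) : ℂ).re) atTop (nhds (‖R h‖ ^ 2)) := by
      have t := (Complex.continuous_re.tendsto _).comp hconv₂
      simp only [Function.comp_def, Complex.ofReal_re] at t
      exact t
    have t1 : Tendsto (fun n => (inner ℂ ((Rn n) h) (R h) : ℂ).re) atTop (nhds (‖R h‖ ^ 2)) := by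
      have t := (Complex.continuous_re.tendsto _).comp hconv₁
      simp only [Function.comp_def, Complex.ofReal_re] at t
      exact t
    have := (t2.sub (t1.const_mul 2)).add_const (‖R h‖ ^ 2)
    rw [hq]
    convert this using 2 <;> ring
  have hsq : Tendsto (fun n => ‖(Rn n) h - R h‖ ^ 2) atTop (nhds 0) := by
    refine tendsto_of_tendsto_of_tendsto_of_le_of_le tendsto_const_nhds h2
      (fun n => by positivity) hle
  have hsqrt := (Real.continuous_sqrt.tendsto 0).comp hsq
  have heq : (fun n => ‖(Rn n) h - R h‖) = fun n => Real.sqrt (‖(Rn n) h - R h‖ ^ 2) := by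
    funext n; rw [Real.sqrt_sq (norm_nonneg _)]
  rw [heq]
  simpa [Function.comp_def] using hsqrt
end

section
/- For every positive integer k, lim_{x→0⁺} (k/π) ∫₀^∞ (x² + t²)^{-1} log(1 + t²/k²) dt = 1. -/
open MeasureTheory Filter Set

/-- Elementary bound: `log (1+v) ≤ 2 √v` for `0 ≤ v`. -/
lemma log_one_add_le_two_sqrt {v : ℝ} (hv : 0 ≤ v) :
    Real.log (1 + v) ≤ 2 * Real.sqrt v := by
  have hs : 0 ≤ Real.sqrt v := Real.sqrt_nonneg v
  have h1 : (1 : ℝ) + v ≤ (1 + Real.sqrt v) ^ 2 := by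
    have := Real.sq_sqrt hv
    nlinarith
  calc Real.log (1 + v) ≤ Real.log ((1 + Real.sqrt v) ^ 2) :=
        Real.log_le_log (by linarith) h1
    _ = 2 * Real.log (1 + Real.sqrt v) := by
        rw [Real.log_pow]; push_cast; ring
    _ ≤ 2 * Real.sqrt v := by
        have := Real.log_le_sub_one_of_pos (show (0:ℝ) < 1 + Real.sqrt v by linarith)
        linarith

lemma log_one_add_le {v : ℝ} (hv : 0 ≤ v) : Real.log (1 + v) ≤ v := by
  have := Real.log_le_sub_one_of_pos (show (0:ℝ) < 1 + v by linarith)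
  linarith

/-- The antiderivative computation: for `K > 0`,
`∫₀^∞ t⁻² log (1 + t²/K²) dt = π / K`, together with integrability. -/
lemma aux_deriv {K : ℝ} (hK : 0 < K) {t : ℝ} (ht : 0 < t) :
    HasDerivAt (fun t : ℝ => -(Real.log (1 + t ^ 2 / K ^ 2)) / t
        + (2 / K) * Real.arctan (t / K))
      ((t ^ 2)⁻¹ * Real.log (1 + t ^ 2 / K ^ 2)) t := by
  have hKt : (0:ℝ) < 1 + t ^ 2 / K ^ 2 := by positivity
  have h1 : HasDerivAt (fun t : ℝ => 1 + t ^ 2 / K ^ 2) (2 * t / K ^ 2) t := by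
    have h := ((hasDerivAt_pow 2 t).div_const (K ^ 2)).const_add 1
    rw [show (2 * t / K ^ 2) = ((2:ℕ):ℝ) * t ^ (2 - 1) / K ^ 2 by norm_num]
    exact h
  have hlog : HasDerivAt (fun t : ℝ => Real.log (1 + t ^ 2 / K ^ 2))
      (2 * t / K ^ 2 / (1 + t ^ 2 / K ^ 2)) t := by
    simpa [div_eq_mul_inv] using h1.log (ne_of_gt hKt)
  have hdiv : HasDerivAt (fun t : ℝ => -(Real.log (1 + t ^ 2 / K ^ 2)) / t)
      ((-(2 * t / K ^ 2 / (1 + t ^ 2 / K ^ 2)) * t - -(Real.log (1 + t ^ 2 / K ^ 2)) * 1)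
        / t ^ 2) t := (hlog.neg.div (hasDerivAt_id t) (ne_of_gt ht))
  have harc : HasDerivAt (fun t : ℝ => (2 / K) * Real.arctan (t / K))
      ((2 / K) * ((1 + (t / K) ^ 2)⁻¹ * (1 / K))) t := by
    have h2 : HasDerivAt (fun t : ℝ => t / K) (1 / K) t := by
      simpa using (hasDerivAt_id t).div_const K
    exact ((Real.hasDerivAt_arctan' (t / K)).comp t h2).const_mul (2 / K)
  have := hdiv.add harc
  refine this.congr_deriv ?_
  have hK' := hK.ne'
  have ht' := ht.ne'
  field_simp
  ring

lemma aux_cont {K : ℝ} (hK : 0 < K) :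
    ContinuousWithinAt (fun t : ℝ => -(Real.log (1 + t ^ 2 / K ^ 2)) / t
        + (2 / K) * Real.arctan (t / K)) (Ici 0) 0 := by
  have h2 : ContinuousWithinAt (fun t : ℝ => (2 / K) * Real.arctan (t / K)) (Ici 0) 0 :=
    (Continuous.continuousWithinAt (by continuity))
  have h1 : Tendsto (fun t : ℝ => -(Real.log (1 + t ^ 2 / K ^ 2)) / t)
      (nhdsWithin 0 (Ici 0)) (nhds 0) := by
    apply tendsto_of_tendsto_of_tendsto_of_le_of_le'
      (g := fun t : ℝ => -(t / K ^ 2)) (h := fun _ : ℝ => (0:ℝ))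
    · have : Tendsto (fun t : ℝ => -(t / K ^ 2)) (nhds (0:ℝ)) (nhds (-(0 / K ^ 2))) := by
        exact (Continuous.tendsto (by continuity) 0)
      simpa using this.mono_left nhdsWithin_le_nhds
    · exact tendsto_const_nhds
    · filter_upwards [self_mem_nhdsWithin] with t (ht : (0:ℝ) ≤ t)
      rcases eq_or_lt_of_le ht with h | h
      · simp [← h]
      · rw [neg_div, neg_le_neg_iff, div_le_div_iff₀ h (by positivity)]
        have := log_one_add_le (show (0:ℝ) ≤ t ^ 2 / K ^ 2 by positivity)
        calc Real.log (1 + t ^ 2 / K ^ 2) * K ^ 2 ≤ (t ^ 2 / K ^ 2) * K ^ 2 := by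
              nlinarith
          _ = t * t := by field_simp
    · filter_upwards [self_mem_nhdsWithin] with t (ht : (0:ℝ) ≤ t)
      rcases eq_or_lt_of_le ht with h | h
      · simp [← h]
      · have hl : 0 ≤ Real.log (1 + t ^ 2 / K ^ 2) :=
          Real.log_nonneg (by nlinarith [sq_nonneg t, sq_nonneg K, div_nonneg (sq_nonneg t) (sq_nonneg K)])
        rw [neg_div]
        simp only [neg_nonpos]
        positivity
  have : Tendsto (fun t : ℝ => -(Real.log (1 + t ^ 2 / K ^ 2)) / t
        + (2 / K) * Real.arctan (t / K)) (nhdsWithin 0 (Ici 0))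
      (nhds (0 + (2 / K) * Real.arctan (0 / K))) := by
    exact h1.add h2
  simpa [ContinuousWithinAt] using this

lemma aux_tendsto {K : ℝ} (hK : 0 < K) :
    Tendsto (fun t : ℝ => -(Real.log (1 + t ^ 2 / K ^ 2)) / t
        + (2 / K) * Real.arctan (t / K)) atTop (nhds (Real.pi / K)) := by
  have h2 : Tendsto (fun t : ℝ => (2 / K) * Real.arctan (t / K)) atTop
      (nhds ((2 / K) * (Real.pi / 2))) := by
    have ha : Tendsto (fun t : ℝ => Real.arctan (t / K)) atTop (nhds (Real.pi / 2)) := by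
      have := Real.tendsto_arctan_atTop.mono_right nhdsWithin_le_nhds
      exact this.comp (tendsto_id.atTop_div_const hK)
    exact ha.const_mul _
  have h1 : Tendsto (fun t : ℝ => -(Real.log (1 + t ^ 2 / K ^ 2)) / t) atTop (nhds 0) := by
    apply tendsto_of_tendsto_of_tendsto_of_le_of_le'
      (g := fun t : ℝ => -((4 / Real.sqrt K) * t ^ (-(1/2) : ℝ))) (h := fun _ : ℝ => (0:ℝ))
    · have := (tendsto_rpow_neg_atTop (show (0:ℝ) < 1/2 by norm_num)).const_mul (4 / Real.sqrt K)
      simpa using this.neg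
    · exact tendsto_const_nhds
    · filter_upwards [eventually_gt_atTop (0:ℝ)] with t ht
      rw [neg_div, neg_le_neg_iff]
      have hb1 : Real.log (1 + t ^ 2 / K ^ 2) ≤ 2 * Real.log (1 + t / K) := by
        have hle : (1:ℝ) + t ^ 2 / K ^ 2 ≤ (1 + t / K) ^ 2 := by
          have h0 : (0:ℝ) ≤ t / K := by positivity
          have : (1 + t / K) ^ 2 = 1 + 2 * (t / K) + (t / K) ^ 2 := by ring
          rw [this, div_pow]
          linarith
        calc Real.log (1 + t ^ 2 / K ^ 2) ≤ Real.log ((1 + t / K) ^ 2) :=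
              Real.log_le_log (by positivity) hle
          _ = 2 * Real.log (1 + t / K) := by
              rw [Real.log_pow]; push_cast; ring
      have hb2 : Real.log (1 + t / K) ≤ 2 * Real.sqrt (t / K) :=
        log_one_add_le_two_sqrt (by positivity)
      have hsq : Real.sqrt (t / K) = Real.sqrt t / Real.sqrt K := Real.sqrt_div ht.le K
      have ht2 : t ^ (-(1/2) : ℝ) = 1 / Real.sqrt t := by
        rw [Real.rpow_neg ht.le, Real.sqrt_eq_rpow]
        norm_num
      rw [div_le_iff₀ ht, ht2]
      have hst : 0 < Real.sqrt t := Real.sqrt_pos.mpr ht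
      have hsK : 0 < Real.sqrt K := Real.sqrt_pos.mpr hK
      have hts : Real.sqrt t * Real.sqrt t = t := Real.mul_self_sqrt ht.le
      calc Real.log (1 + t ^ 2 / K ^ 2) ≤ 4 * (Real.sqrt t / Real.sqrt K) := by
            rw [← hsq]; linarith
        _ = 4 / Real.sqrt K * (1 / Real.sqrt t) * t := by
            field_simp
            nlinarith
    · filter_upwards [eventually_gt_atTop (0:ℝ)] with t ht
      have hl : 0 ≤ Real.log (1 + t ^ 2 / K ^ 2) :=
        Real.log_nonneg (by nlinarith [div_nonneg (sq_nonneg t) (sq_nonneg K)])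
      rw [neg_div]
      simp only [neg_nonpos]
      positivity
  have := h1.add h2
  convert this using 2
  field_simp
  ring

lemma aux_integral {K : ℝ} (hK : 0 < K) :
    (∫ t in Ioi (0:ℝ), (t ^ 2)⁻¹ * Real.log (1 + t ^ 2 / K ^ 2)) = Real.pi / K ∧
    IntegrableOn (fun t : ℝ => (t ^ 2)⁻¹ * Real.log (1 + t ^ 2 / K ^ 2)) (Ioi 0) := by
  have hpos : ∀ x ∈ Ioi (0:ℝ), 0 ≤ (x ^ 2)⁻¹ * Real.log (1 + x ^ 2 / K ^ 2) := by
    intro x hx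
    have : (0:ℝ) < x := hx
    have hl : 0 ≤ Real.log (1 + x ^ 2 / K ^ 2) :=
      Real.log_nonneg (by nlinarith [div_nonneg (sq_nonneg x) (sq_nonneg K)])
    positivity
  have hd : ∀ x ∈ Ioi (0:ℝ),
      HasDerivAt (fun t : ℝ => -(Real.log (1 + t ^ 2 / K ^ 2)) / t
        + (2 / K) * Real.arctan (t / K)) ((x ^ 2)⁻¹ * Real.log (1 + x ^ 2 / K ^ 2)) x :=
    fun x hx => aux_deriv hK hx
  constructor
  · have := integral_Ioi_of_hasDerivAt_of_nonneg (aux_cont hK) hd hpos (aux_tendsto hK)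
    rw [this]
    simp [Real.arctan_zero]
  · exact integrableOn_Ioi_deriv_of_nonneg (aux_cont hK) hd hpos (aux_tendsto hK)

/-- For every positive integer `k`,
`(k/π) ∫₀^∞ (x² + t²)⁻¹ log(1 + t²/k²) dt → 1` as `x → 0⁺`. -/
theorem log_poisson_integral_limit (k : ℕ) (hk : 0 < k) :
    Tendsto
      (fun x : ℝ => ((k : ℝ) / Real.pi) *
        ∫ t in Set.Ioi (0 : ℝ), (x ^ 2 + t ^ 2)⁻¹ * Real.log (1 + t ^ 2 / (k : ℝ) ^ 2))
      (nhdsWithin 0 (Set.Ioi 0)) (nhds 1) := by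
  have hK : (0:ℝ) < (k:ℝ) := by exact_mod_cast hk
  obtain ⟨hval, hint⟩ := aux_integral hK
  have hmain : Tendsto (fun x : ℝ =>
      ∫ t in Ioi (0:ℝ), (x ^ 2 + t ^ 2)⁻¹ * Real.log (1 + t ^ 2 / (k:ℝ) ^ 2))
      (nhdsWithin 0 (Ioi 0))
      (nhds (∫ t in Ioi (0:ℝ), (t ^ 2)⁻¹ * Real.log (1 + t ^ 2 / (k:ℝ) ^ 2))) := by
    apply tendsto_integral_filter_of_dominated_convergence
      (bound := fun t => (t ^ 2)⁻¹ * Real.log (1 + t ^ 2 / (k:ℝ) ^ 2))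
    · filter_upwards [self_mem_nhdsWithin] with x (hx : (0:ℝ) < x)
      apply Continuous.aestronglyMeasurable
      apply Continuous.mul
      · exact ((continuous_const.pow 2).add (continuous_pow 2)).inv₀ (fun t => by simp only [Pi.add_apply, Pi.pow_apply]; positivity)
      · exact (continuous_const.add ((continuous_pow 2).div_const _)).log (fun t => by simp only [Pi.add_apply]; positivity)
    · filter_upwards [self_mem_nhdsWithin] with x (hx : (0:ℝ) < x)
      filter_upwards [ae_restrict_mem measurableSet_Ioi] with t (ht : (0:ℝ) < t)
      have hl : 0 ≤ Real.log (1 + t ^ 2 / (k:ℝ) ^ 2) :=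
        Real.log_nonneg (le_add_of_nonneg_right (by positivity))
      rw [Real.norm_eq_abs, abs_of_nonneg (by positivity)]
      apply mul_le_mul_of_nonneg_right _ hl
      apply inv_anti₀ (by positivity)
      nlinarith
    · exact hint
    · filter_upwards [ae_restrict_mem measurableSet_Ioi] with t (ht : (0:ℝ) < t)
      have hc : ContinuousAt
          (fun x : ℝ => (x ^ 2 + t ^ 2)⁻¹ * Real.log (1 + t ^ 2 / (k:ℝ) ^ 2)) 0 := by
        apply ContinuousAt.mul _ continuousAt_const
        exact ContinuousAt.inv₀ ((continuous_pow 2).add continuous_const).continuousAt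
          (by positivity)
      have := Tendsto.mono_left hc.tendsto
        (nhdsWithin_le_nhds : nhdsWithin (0:ℝ) (Ioi 0) ≤ nhds 0)
      simpa using this
  have hfin := hmain.const_mul ((k:ℝ) / Real.pi)
  rw [hval] at hfin
  have : (k:ℝ) / Real.pi * (Real.pi / (k:ℝ)) = 1 := by
    field_simp
  rw [this] at hfin
  exact hfin
end

section
/- Let η > 0, 0 ≤ α < 1, and s² = 4/(1−α). Define f(z) = ((z² − 2ηz + 2ηs²/2)/(z² + 2ηz + 2ηs²/2))·e^{−αz}, more precisely f(z) = (z² − 2η(z − 2/(1−α)))/(z² + 2η(z + 2/(1−α))) · e^{−αz}. Then for real x ≥ 0: 0 ≤ f(x) ≤ 1, f(0) = 1, and f'(0) = −1, i.e. f is a Kato function. -/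
open Filter

/-- For `0 < η ≤ 4/(1−α)`, `0 ≤ α < 1`, the function
`f(x) = (x² − 2η(x − 2/(1−α)))/(x² + 2η(x + 2/(1−α))) · e^{−αx}` is a Kato function:
`0 ≤ f ≤ 1` on `[0,∞)`, `f(0) = 1` and `f'(0) = −1`. -/
theorem blaschke_exponential_is_kato
    (η α : ℝ) (hη : 0 < η) (hα0 : 0 ≤ α) (hα1 : α < 1) (hηle : η ≤ 4 / (1 - α))
    (f : ℝ → ℝ)
    (hf : f = fun x => (x ^ 2 - 2 * η * (x - 2 / (1 - α))) /
      (x ^ 2 + 2 * η * (x + 2 / (1 - α))) * Real.exp (-α * x)) :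
    (∀ x : ℝ, 0 ≤ x → 0 ≤ f x ∧ f x ≤ 1) ∧ f 0 = 1 ∧
      Tendsto (fun x => (f x - 1) / x) (nhdsWithin 0 (Set.Ioi 0)) (nhds (-1)) := by
  have h1α : (0:ℝ) < 1 - α := by linarith
  set c : ℝ := 2 / (1 - α) with hc_def
  have hc : 0 < c := by positivity
  have h2c : η ≤ 2 * c := by
    have : 2 * c = 4 / (1 - α) := by rw [hc_def]; ring
    linarith [this ▸ hηle]
  -- bounds
  have hbounds : ∀ x : ℝ, 0 ≤ x → 0 ≤ f x ∧ f x ≤ 1 := by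
    intro x hx
    have hD : 0 < x ^ 2 + 2 * η * (x + c) := by positivity
    have hN : 0 ≤ x ^ 2 - 2 * η * (x - c) := by
      nlinarith [sq_nonneg (x - η)]
    have hNQ : 0 ≤ (x ^ 2 - 2 * η * (x - c)) / (x ^ 2 + 2 * η * (x + c)) :=
      div_nonneg hN hD.le
    have hexp : Real.exp (-α * x) ≤ 1 := by
      apply Real.exp_le_one_iff.mpr; nlinarith
    have hle : (x ^ 2 - 2 * η * (x - c)) / (x ^ 2 + 2 * η * (x + c)) ≤ 1 := by
      rw [div_le_one hD]; nlinarith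
    constructor
    · rw [hf]; exact mul_nonneg hNQ (Real.exp_pos _).le
    · rw [hf]
      calc (x ^ 2 - 2 * η * (x - c)) / (x ^ 2 + 2 * η * (x + c)) * Real.exp (-α * x)
          ≤ 1 * 1 := mul_le_mul hle hexp (Real.exp_pos _).le one_pos.le
        _ = 1 := by ring
  have hf0 : f 0 = 1 := by
    rw [hf]
    simp only [ne_eq]
    have : (0:ℝ) ^ 2 + 2 * η * (0 + c) = 2 * η * c := by ring
    have h2ηc : (2 * η * c : ℝ) ≠ 0 := by positivity
    field_simp
    simp only [zero_mul, neg_zero, Real.exp_zero, mul_one]; ring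
  refine ⟨hbounds, hf0, ?_⟩
  -- derivative at 0
  have hD0 : (0:ℝ) ^ 2 + 2 * η * (0 + c) ≠ 0 := by positivity
  have hx2 : HasDerivAt (fun x : ℝ => x ^ 2) 0 0 := by
    simpa using hasDerivAt_pow 2 (0:ℝ)
  have hlinN : HasDerivAt (fun x : ℝ => 2 * η * (x - c)) (2 * η) 0 := by
    simpa using ((hasDerivAt_id (0:ℝ)).sub_const c).const_mul (2 * η)
  have hlinD : HasDerivAt (fun x : ℝ => 2 * η * (x + c)) (2 * η) 0 := by
    simpa using ((hasDerivAt_id (0:ℝ)).add_const c).const_mul (2 * η)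
  have hN' : HasDerivAt (fun x : ℝ => x ^ 2 - 2 * η * (x - c)) (0 - 2 * η) 0 := hx2.sub hlinN
  have hD' : HasDerivAt (fun x : ℝ => x ^ 2 + 2 * η * (x + c)) (0 + 2 * η) 0 := hx2.add hlinD
  have hQ := hN'.div hD' hD0
  have hE : HasDerivAt (fun x : ℝ => Real.exp (-α * x)) (Real.exp (-α * 0) * (-α)) 0 := by
    have : HasDerivAt (fun x : ℝ => -α * x) (-α) 0 := by
      simpa using (hasDerivAt_id (0:ℝ)).const_mul (-α)
    exact this.exp
  have hfd : HasDerivAt f (-1) 0 := by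
    rw [hf]
    convert hQ.mul hE using 1
    · rfl
    · rfl
    · rfl
    have hη' : (η:ℝ) ≠ 0 := ne_of_gt hη
    have hc' : (c:ℝ) ≠ 0 := ne_of_gt hc
    have h1α' : (1 - α : ℝ) ≠ 0 := ne_of_gt h1α
    rw [hc_def]
    simp only [Pi.div_apply, mul_zero, Real.exp_zero]
    field_simp
    ring
  have hslope := hasDerivAt_iff_tendsto_slope.mp hfd
  have hmono : nhdsWithin (0:ℝ) (Set.Ioi 0) ≤ nhdsWithin 0 {(0:ℝ)}ᶜ := by
    apply nhdsWithin_mono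
    intro x hx
    exact ne_of_gt hx
  have := hslope.mono_left hmono
  refine this.congr' ?_
  filter_upwards [self_mem_nhdsWithin] with x hx
  simp [slope, hf0, div_eq_inv_mul]
end
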